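/- arXiv:2512.15843 — 6 statements merged into one kernel-verified Lean document; each statement's English description precedes it below -/
import Mathlib

section
/- Let c, d : V → M be a Majorana family in the Clifford algebra of a quadratic form Q over ℂ. Then for all indices i, j, k, l in V, the commutator satisfies ⁅ι(c k) * ι(d l), ι(c i) * ι(d j)⁆ = 2 • ( (if j = l then ι(c i) * ι(c k) else 0) + (if i = k then ι(d j) * ι(d l) else 0) − (if i = k ∧ j = l then 2 else 0) ), where ⁅a,b⁆ = a*b − b*a. In particular the commutator vanishes whenever i ≠ k and j ≠ l, and also when i = k and j = l. -/
/-!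
In any ring, `⁅a * b, c * d⁆` is a combination of the anticommutators of `a, b, c, d`. For
generators of a Clifford algebra, `ι x * ι y + ι y * ι x` is the scalar `polar Q x y`; for a
Majorana family the mixed ones vanish and the others are `2` or `0` according as the two
indices agree, which leaves exactly the stated formula.
-/

theorem Ring.lie_mul_mul_eq_sum_anticomm {A : Type*} [Ring A] (a b c d : A) :
    ⁅a * b, c * d⁆ =
      a * (b * c + c * b) * d - c * (a * d + d * a) * b + c * a * (b * d + d * b) +
        (a * c + c * a) * d * b - (a * c + c * a) * (b * d + d * b) := by
  rw [Ring.lie_def]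
  noncomm_ring

namespace CliffordAlgebra

variable {R M : Type*} [CommRing R] [AddCommGroup M] [Module R M] {Q : QuadraticForm R M}

theorem lie_ι_mul_ι_of_polar_eq_zero {a b c d : M}
    (hbc : QuadraticMap.polar Q b c = 0) (had : QuadraticMap.polar Q a d = 0) :
    ⁅ι Q a * ι Q b, ι Q c * ι Q d⁆ =
      QuadraticMap.polar Q b d • (ι Q c * ι Q a) + QuadraticMap.polar Q a c • (ι Q d * ι Q b) -
        (QuadraticMap.polar Q a c * QuadraticMap.polar Q b d) • 1 := by
  rw [Ring.lie_mul_mul_eq_sum_anticomm]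
  simp only [ι_mul_ι_add_swap, hbc, had, map_zero, mul_zero, zero_mul, ← map_mul,
    ← Algebra.commutes (R := R) _ (ι Q c * ι Q a), Algebra.smul_def, mul_one]
  noncomm_ring

end CliffordAlgebra

theorem QuadraticMap.polar_eq_ite_of_orthonormal {R M V : Type*} [CommRing R] [AddCommGroup M]
    [Module R M] [DecidableEq V] {Q : QuadraticForm R M} {e : V → M} (hQ : ∀ v, Q (e v) = 1)
    (horth : ∀ v w, v ≠ w → QuadraticMap.polar Q (e v) (e w) = 0) (v w : V) :
    QuadraticMap.polar Q (e v) (e w) = if v = w then 2 else 0 := by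
  split_ifs with h
  · subst h
    rw [QuadraticMap.polar_self, hQ, nsmul_eq_mul, mul_one, Nat.cast_ofNat]
  · exact horth v w h

/-- Commutator of two stabilizer-type quadratic Majorana terms for a Majorana family
`c, d : V → M` in the Clifford algebra of `Q` over `ℂ`:
`⁅ι(c k) * ι(d l), ι(c i) * ι(d j)⁆
  = 2 • ((if j = l then ι(c i)*ι(c k) else 0) + (if i = k then ι(d j)*ι(d l) else 0)
          - (if i = k ∧ j = l then 2 else 0))`.
In particular the commutator vanishes when `i ≠ k ∧ j ≠ l`, and when `i = k ∧ j = l`. -/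
theorem majorana_pair_commutator {V : Type*} [DecidableEq V]
    {M : Type*} [AddCommGroup M] [Module ℂ M]
    (Q : QuadraticForm ℂ M) (c d : V → M)
    (hQc : ∀ v, Q (c v) = 1) (hQd : ∀ v, Q (d v) = 1)
    (hcc : ∀ v w, v ≠ w → QuadraticMap.polar Q (c v) (c w) = 0)
    (hdd : ∀ v w, v ≠ w → QuadraticMap.polar Q (d v) (d w) = 0)
    (hcd : ∀ v w, QuadraticMap.polar Q (c v) (d w) = 0)
    (i j k l : V) :
    (⁅CliffordAlgebra.ι Q (c k) * CliffordAlgebra.ι Q (d l),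
        CliffordAlgebra.ι Q (c i) * CliffordAlgebra.ι Q (d j)⁆ =
      2 • ((if j = l then CliffordAlgebra.ι Q (c i) * CliffordAlgebra.ι Q (c k) else 0) +
           (if i = k then CliffordAlgebra.ι Q (d j) * CliffordAlgebra.ι Q (d l) else 0) -
           (if i = k ∧ j = l then (2 : CliffordAlgebra Q) else 0))) ∧
    (i ≠ k → j ≠ l →
      ⁅CliffordAlgebra.ι Q (c k) * CliffordAlgebra.ι Q (d l),
        CliffordAlgebra.ι Q (c i) * CliffordAlgebra.ι Q (d j)⁆ = 0) ∧
    (i = k → j = l →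
      ⁅CliffordAlgebra.ι Q (c k) * CliffordAlgebra.ι Q (d l),
        CliffordAlgebra.ι Q (c i) * CliffordAlgebra.ι Q (d j)⁆ = 0) := by
  have hdc : QuadraticMap.polar Q (d l) (c i) = 0 := by rw [QuadraticMap.polar_comm, hcd]
  have two_eq : (2 : CliffordAlgebra Q) = (2 : ℂ) • 1 := by rw [two_smul, one_add_one_eq_two]
  have formula : ⁅CliffordAlgebra.ι Q (c k) * CliffordAlgebra.ι Q (d l),
        CliffordAlgebra.ι Q (c i) * CliffordAlgebra.ι Q (d j)⁆ =
      2 • ((if j = l then CliffordAlgebra.ι Q (c i) * CliffordAlgebra.ι Q (c k) else 0) +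
           (if i = k then CliffordAlgebra.ι Q (d j) * CliffordAlgebra.ι Q (d l) else 0) -
           (if i = k ∧ j = l then (2 : CliffordAlgebra Q) else 0)) := by
    rw [CliffordAlgebra.lie_ι_mul_ι_of_polar_eq_zero hdc (hcd k j),
      QuadraticMap.polar_eq_ite_of_orthonormal hQc hcc,
      QuadraticMap.polar_eq_ite_of_orthonormal hQd hdd]
    by_cases hik : i = k <;> by_cases hjl : j = l <;>
      simp only [hik, hjl, eq_comm (a := k), eq_comm (a := l), if_true, if_false, and_self,
        and_true, and_false, two_eq] <;> module
  refine ⟨formula, fun hik hjl => ?_, fun hik hjl => ?_⟩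
  · simp [formula, hik, hjl]
  · subst hik hjl
    simp [formula, CliffordAlgebra.ι_sq_scalar, hQc, hQd, one_add_one_eq_two]
end

section
/- Let G be a simple graph on a finite vertex type V (with decidable adjacency) such that every vertex has degree at most 2. Then there exists an orientation o of the edge set of G such that each vertex is the tail of at most one oriented edge and the head of at most one oriented edge; formally, there exists o : G.edgeSet → V × V with Sym2.mk ((o e).1, (o e).2) = e for every edge e, such that the map e ↦ (o e).1 is injective and the map e ↦ (o e).2 is injective. -/
/-!
Peel off the edges one at a time, keeping track of a stronger statement: if `s ≠ t` both have
degree at most one, there is an orientation in which no arc enters `s` and no arc leaves `t`.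
To orient everything, remove an edge `xy` and orient the rest with source `y` and sink `x`; then
add the arc `x → y`. For the stronger statement, say `t` lies on an edge `ct`: orient the rest with
source `s` and sink `c` (or arbitrarily if `c = s`, which is then isolated) and add `c → t`.
Reversing all arcs exchanges sources and sinks, which handles the case where only `s` has an edge.
-/

open Finset Function

section

variable {V : Type*}

structure IsInjectiveOrientation (E : Set (Sym2 V)) (D : Set (V × V)) : Prop where
  image_eq : uncurry Sym2.mk '' D = E
  injOn_fst : D.InjOn Prod.fst
  injOn_snd : D.InjOn Prod.snd

namespace IsInjectiveOrientation

variable {E : Set (Sym2 V)} {D : Set (V × V)}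

theorem empty : IsInjectiveOrientation (∅ : Set (Sym2 V)) ∅ :=
  ⟨Set.image_empty _, Set.injOn_empty _, Set.injOn_empty _⟩

theorem insert (hD : IsInjectiveOrientation E D) {x y : V} (hx : x ∉ Prod.fst '' D)
    (hy : y ∉ Prod.snd '' D) : IsInjectiveOrientation (insert s(x, y) E) (insert (x, y) D) := by
  have hxy : (x, y) ∉ D := fun h => hx ⟨_, h, rfl⟩
  refine ⟨?_, (Set.injOn_insert hxy).2 ⟨hD.injOn_fst, hx⟩,
    (Set.injOn_insert hxy).2 ⟨hD.injOn_snd, hy⟩⟩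
  rw [Set.image_insert_eq, hD.image_eq, uncurry_apply_pair]

theorem image_swap (hD : IsInjectiveOrientation E D) :
    IsInjectiveOrientation E (Prod.swap '' D) := by
  have hmk : uncurry Sym2.mk ∘ Prod.swap = uncurry (Sym2.mk (α := V)) :=
    funext fun p => Sym2.eq_swap
  exact ⟨by rw [Set.image_image, ← comp_def, hmk, hD.image_eq],
    Set.InjOn.image_of_comp hD.injOn_snd, Set.InjOn.image_of_comp hD.injOn_fst⟩

theorem fst_notMem (hD : IsInjectiveOrientation E D) {v : V} (hv : ∀ e ∈ E, v ∉ e) :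
    v ∉ Prod.fst '' D := by
  rintro ⟨⟨v, w⟩, hp, rfl⟩
  exact hv _ (hD.image_eq ▸ Set.mem_image_of_mem _ hp) (Sym2.mem_mk_left v w)

theorem snd_notMem (hD : IsInjectiveOrientation E D) {v : V} (hv : ∀ e ∈ E, v ∉ e) :
    v ∉ Prod.snd '' D := by
  rintro ⟨⟨w, v⟩, hp, rfl⟩
  exact hv _ (hD.image_eq ▸ Set.mem_image_of_mem _ hp) (Sym2.mem_mk_right w v)

theorem exists_injective_fst_snd (hD : IsInjectiveOrientation E D) :
    ∃ o : E → V × V, (∀ e, s((o e).1, (o e).2) = e) ∧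
      Injective (fun e => (o e).1) ∧ Injective (fun e => (o e).2) := by
  have hsurj : ∀ e : E, ∃ p ∈ D, uncurry Sym2.mk p = e := fun e => hD.image_eq ▸ e.2
  choose o hoD ho using hsurj
  refine ⟨o, ho, fun e f h => ?_, fun e f h => ?_⟩
  · exact Subtype.ext (by rw [← ho e, ← ho f, hD.injOn_fst (hoD e) (hoD f) h])
  · exact Subtype.ext (by rw [← ho e, ← ho f, hD.injOn_snd (hoD e) (hoD f) h])

end IsInjectiveOrientation

variable [DecidableEq V]

def edgeDegree (E : Finset (Sym2 V)) (v : V) : ℕ := #{e ∈ E | v ∈ e}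

section edgeDegree

variable {E E' : Finset (Sym2 V)} {e : Sym2 V} {v : V}

theorem edgeDegree_eq_zero_iff : edgeDegree E v = 0 ↔ ∀ e ∈ E, v ∉ e :=
  card_filter_eq_zero_iff

theorem edgeDegree_mono (h : E' ⊆ E) : edgeDegree E' v ≤ edgeDegree E v :=
  card_le_card (filter_subset_filter _ h)

theorem edgeDegree_erase_add_one (he : e ∈ E) (hv : v ∈ e) :
    edgeDegree (E.erase e) v + 1 = edgeDegree E v := by
  rw [edgeDegree, filter_erase, card_erase_add_one (mem_filter.2 ⟨he, hv⟩), edgeDegree]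

theorem exists_mk_mem_of_edgeDegree_pos (h : 0 < edgeDegree E v) : ∃ w, s(w, v) ∈ E := by
  obtain ⟨e, he⟩ := card_pos.1 h
  obtain ⟨he, hv⟩ := mem_filter.1 he
  obtain ⟨w, rfl⟩ := Sym2.mem_iff_exists.1 hv
  exact ⟨w, Sym2.eq_swap ▸ he⟩

theorem SimpleGraph.edgeDegree_edgeFinset (G : SimpleGraph V) [Fintype G.edgeSet]
    [Fintype (G.neighborSet v)] : edgeDegree G.edgeFinset v = G.degree v := by
  rw [edgeDegree, ← G.incidenceFinset_eq_filter, G.card_incidenceFinset_eq_degree]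

end edgeDegree

structure IsMaxDegreeLeTwo (E : Finset (Sym2 V)) : Prop where
  not_isDiag : ∀ e ∈ E, ¬ e.IsDiag
  edgeDegree_le : ∀ v, edgeDegree E v ≤ 2

theorem IsMaxDegreeLeTwo.mono {E E' : Finset (Sym2 V)} (hE : IsMaxDegreeLeTwo E) (h : E' ⊆ E) :
    IsMaxDegreeLeTwo E' :=
  ⟨fun e he => hE.not_isDiag e (h he), fun v => (edgeDegree_mono h).trans (hE.edgeDegree_le v)⟩

def SourceSinkOrientable (E : Finset (Sym2 V)) : Prop :=
  ∀ s t, s ≠ t → edgeDegree E s ≤ 1 → edgeDegree E t ≤ 1 →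
    ∃ D, IsInjectiveOrientation (E : Set (Sym2 V)) D ∧ s ∉ Prod.snd '' D ∧ t ∉ Prod.fst '' D

namespace IsMaxDegreeLeTwo

variable {E : Finset (Sym2 V)}

theorem exists_isInjectiveOrientation_of_ssubset (hE : IsMaxDegreeLeTwo E)
    (ih : ∀ E' ⊂ E, SourceSinkOrientable E') :
    ∃ D, IsInjectiveOrientation (E : Set (Sym2 V)) D := by
  rcases E.eq_empty_or_nonempty with rfl | ⟨e, he⟩
  · exact ⟨∅, by simpa using IsInjectiveOrientation.empty⟩
  induction e using Sym2.ind with | h x y => ?_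
  have hxy : x ≠ y := fun h => hE.not_isDiag _ he (Sym2.mk_isDiag_iff.2 h)
  have hx := edgeDegree_erase_add_one he (Sym2.mem_mk_left x y)
  have hy := edgeDegree_erase_add_one he (Sym2.mem_mk_right x y)
  have := hE.edgeDegree_le x
  have := hE.edgeDegree_le y
  obtain ⟨D, hD, hyD, hxD⟩ := ih _ (erase_ssubset he) y x hxy.symm (by omega) (by omega)
  refine ⟨insert (x, y) D, ?_⟩
  rw [← insert_erase he, coe_insert]
  exact hD.insert hxD hyD

theorem exists_orientation_of_edgeDegree_sink_eq_one (hE : IsMaxDegreeLeTwo E)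
    (ih : ∀ E' ⊂ E, SourceSinkOrientable E') {s t : V} (hst : s ≠ t)
    (hs : edgeDegree E s ≤ 1) (ht : edgeDegree E t = 1) :
    ∃ D, IsInjectiveOrientation (E : Set (Sym2 V)) D ∧ s ∉ Prod.snd '' D ∧ t ∉ Prod.fst '' D := by
  obtain ⟨c, he⟩ := exists_mk_mem_of_edgeDegree_pos (ht ▸ one_pos)
  have hct : c ≠ t := fun h => hE.not_isDiag _ he (Sym2.mk_isDiag_iff.2 h)
  have hc := edgeDegree_erase_add_one he (Sym2.mem_mk_left c t)
  have ht' : ∀ e ∈ E.erase s(c, t), t ∉ e := edgeDegree_eq_zero_iff.1 <| by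
    have := edgeDegree_erase_add_one he (Sym2.mem_mk_right c t)
    omega
  obtain ⟨D, hD, hsD, hcD⟩ : ∃ D, IsInjectiveOrientation (E.erase s(c, t) : Set (Sym2 V)) D ∧
      s ∉ Prod.snd '' D ∧ c ∉ Prod.fst '' D := by
    rcases eq_or_ne c s with rfl | hcs
    · have hc' : ∀ e ∈ E.erase s(c, t), c ∉ e := edgeDegree_eq_zero_iff.1 (by omega)
      obtain ⟨D, hD⟩ := (hE.mono (erase_subset _ _)).exists_isInjectiveOrientation_of_ssubset
        fun E' h => ih E' (h.trans (erase_ssubset he))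
      exact ⟨D, hD, hD.snd_notMem hc', hD.fst_notMem hc'⟩
    · have := hE.edgeDegree_le c
      exact ih _ (erase_ssubset he) s c hcs.symm ((edgeDegree_mono (erase_subset _ _)).trans hs)
        (by omega)
  refine ⟨insert (c, t) D, ?_, ?_, ?_⟩
  · rw [← insert_erase he, coe_insert]
    exact hD.insert hcD (hD.snd_notMem ht')
  · simp [Set.image_insert_eq, hst, hsD]
  · simp [Set.image_insert_eq, hct.symm, hD.fst_notMem ht']

theorem sourceSinkOrientable (hE : IsMaxDegreeLeTwo E) : SourceSinkOrientable E := by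
  induction E using Finset.strongInduction with | H E ih => ?_
  have ih' : ∀ E' ⊂ E, SourceSinkOrientable E' := fun E' h => ih E' h (hE.mono h.subset)
  intro s t hst hs ht
  rcases (Nat.le_one_iff_eq_zero_or_eq_one.1 ht).symm with ht1 | ht0
  · exact hE.exists_orientation_of_edgeDegree_sink_eq_one ih' hst hs ht1
  rcases (Nat.le_one_iff_eq_zero_or_eq_one.1 hs).symm with hs1 | hs0
  · obtain ⟨D, hD, htD, hsD⟩ :=
      hE.exists_orientation_of_edgeDegree_sink_eq_one ih' hst.symm ht hs1
    refine ⟨Prod.swap '' D, hD.image_swap, ?_, ?_⟩ <;> rw [Set.image_image]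
    exacts [hsD, htD]
  obtain ⟨D, hD⟩ := hE.exists_isInjectiveOrientation_of_ssubset ih'
  exact ⟨D, hD, hD.snd_notMem (edgeDegree_eq_zero_iff.1 hs0),
    hD.fst_notMem (edgeDegree_eq_zero_iff.1 ht0)⟩

theorem exists_isInjectiveOrientation (hE : IsMaxDegreeLeTwo E) :
    ∃ D, IsInjectiveOrientation (E : Set (Sym2 V)) D :=
  hE.exists_isInjectiveOrientation_of_ssubset fun _ h => (hE.mono h.subset).sourceSinkOrientable

end IsMaxDegreeLeTwo

end

/-- A graph of maximum degree at most two admits an orientation of its edges in which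
every vertex is the tail of at most one oriented edge and the head of at most one
oriented edge. -/
theorem exists_orientation_of_degree_le_two {V : Type*} [Fintype V] [DecidableEq V]
    (G : SimpleGraph V) [DecidableRel G.Adj]
    (hdeg : ∀ v : V, G.degree v ≤ 2) :
    ∃ o : G.edgeSet → V × V,
      (∀ e : G.edgeSet, Sym2.mk (o e).1 (o e).2 = (e : Sym2 V)) ∧
      Function.Injective (fun e : G.edgeSet => (o e).1) ∧
      Function.Injective (fun e : G.edgeSet => (o e).2) := by
  have hG : IsMaxDegreeLeTwo G.edgeFinset :=
    ⟨fun _ he => G.not_isDiag_of_mem_edgeSet (SimpleGraph.mem_edgeFinset.1 he),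
      fun v => (G.edgeDegree_edgeFinset (v := v)).trans_le (hdeg v)⟩
  obtain ⟨D, hD⟩ := hG.exists_isInjectiveOrientation
  rw [SimpleGraph.coe_edgeFinset] at hD
  exact hD.exists_injective_fst_snd
end

section
/- (Lemma 2 of the paper.) Let G be a simple graph on a finite vertex type V (with decidable equality and adjacency), let N₁ and N₂ be subgraphs of G whose edge sets each form a matching (N₁.IsMatching and N₂.IsMatching), and let c, d : V → M be a Majorana family in the Clifford algebra of a quadratic form Q over ℂ. Then there exists an orientation o of the edges of N₁.edgeSet ∪ N₂.edgeSet such that the stabilizers P(e) := ι(c (o e).1) * ι(d (o e).2) pairwise commute: for all e₁, e₂ ∈ N₁.edgeSet ∪ N₂.edgeSet, P(e₁) * P(e₂) = P(e₂) * P(e₁). -/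
/-!
Fix a proper 2-colouring of `N₁ ⊔ N₂` and orient each edge so that its first endpoint has colour
`true` if the edge lies in `N₁` and `false` otherwise. Then each vertex is the first endpoint of at
most one edge and the second endpoint of at most one edge, so distinct edges have distinct `c`- and
`d`-vertices, the four Majorana factors of two stabilizers pairwise anticommute, and the
stabilizers commute.

The colouring comes from the partner involutions `σ₁`, `σ₂` of the two matchings. After turning
their fixed points into swaps on a doubled vertex set they are fixed-point free, and then no power
of `π = σ₂ σ₁` maps `w` to `σ₁ w`: the elements `σ₁ πᵏ` are conjugate to `σ₁` or `σ₂`. So `σ₁`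
induces a fixed-point-free involution on the `π`-cycles, and colouring one cycle of each swapped
pair `true` colours both `σ₁`- and `σ₂`-edges properly.
-/

open Function Equiv

section Dihedral

variable {G : Type*} [Group G]

theorem SemiconjBy.mul_zpow_eq_zpow_neg_mul {x π : G} (h : SemiconjBy x π π⁻¹) (k : ℤ) :
    x * π ^ k = π ^ (-k) * x := by
  rw [(h.zpow_right k).eq, inv_zpow']

variable {s t : G}

theorem semiconjBy_right_factor (hs : s * s = 1) (ht : t * t = 1) :
    SemiconjBy s (t * s) (t * s)⁻¹ := by
  rw [SemiconjBy, mul_inv_rev, inv_eq_of_mul_eq_one_right hs, inv_eq_of_mul_eq_one_right ht,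
    mul_assoc]

theorem semiconjBy_left_factor (hs : s * s = 1) (ht : t * t = 1) :
    SemiconjBy t (t * s) (t * s)⁻¹ := by
  rw [SemiconjBy, mul_inv_rev, inv_eq_of_mul_eq_one_right hs, inv_eq_of_mul_eq_one_right ht,
    ← mul_assoc, ht, mul_assoc, ht, one_mul, mul_one]

theorem zpow_smul_ne_smul {W : Type*} [MulAction G W] (hs : s * s = 1) (ht : t * t = 1)
    (hs_fix : ∀ w : W, s • w ≠ w) (ht_fix : ∀ w : W, t • w ≠ w) (k : ℤ) (w : W) :
    (t * s) ^ k • w ≠ s • w := by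
  intro h
  obtain ⟨m, rfl | rfl⟩ := Int.even_or_odd' k
  · apply hs_fix ((t * s) ^ m • w)
    rw [smul_smul, (semiconjBy_right_factor hs ht).mul_zpow_eq_zpow_neg_mul, mul_smul, ← h,
      smul_smul, ← zpow_add]
    congr 2; ring
  · apply ht_fix ((t * s) ^ (m + 1) • w)
    have htw : t • w = (t * s) • s • w := by rw [smul_smul, mul_assoc, hs, mul_one]
    rw [smul_smul, (semiconjBy_left_factor hs ht).mul_zpow_eq_zpow_neg_mul, mul_smul, htw,
      ← h, smul_smul, smul_smul, ← zpow_add_one, ← zpow_add]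
    congr 2; ring

end Dihedral

theorem Function.Involutive.exists_two_coloring {X : Type*} {f : X → X} (hf : Involutive f)
    (hfix : ∀ x, f x ≠ x) : ∃ δ : X → Bool, ∀ x, δ (f x) ≠ δ x := by
  let := WellOrderingRel.isWellOrder.linearOrder (α := X)
  refine ⟨fun x => decide (x < f x), fun x => ?_⟩
  show decide (f x < f (f x)) ≠ decide (x < f x)
  rw [hf x]
  rcases (hfix x).lt_or_gt with h | h <;> simp [h, h.le]

namespace Equiv.Perm

variable {W : Type*} {τ₁ τ₂ : Perm W}

theorem not_sameCycle_apply_of_fixedPointFree (h₁ : τ₁ * τ₁ = 1) (h₂ : τ₂ * τ₂ = 1)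
    (hfix₁ : ∀ w, τ₁ w ≠ w) (hfix₂ : ∀ w, τ₂ w ≠ w) (w : W) :
    ¬ (τ₂ * τ₁).SameCycle w (τ₁ w) := fun ⟨k, hk⟩ =>
  zpow_smul_ne_smul h₁ h₂ hfix₁ hfix₂ k w hk

theorem SameCycle.apply_of_involutive (h₁ : τ₁ * τ₁ = 1) (h₂ : τ₂ * τ₂ = 1) {x y : W}
    (h : (τ₂ * τ₁).SameCycle x y) : (τ₂ * τ₁).SameCycle (τ₁ x) (τ₁ y) := by
  have hconj : τ₁ * (τ₂ * τ₁) * τ₁⁻¹ = (τ₂ * τ₁)⁻¹ :=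
    mul_inv_eq_iff_eq_mul.mpr (semiconjBy_right_factor h₁ h₂).eq
  have := h.conj (g := τ₁)
  rwa [hconj, sameCycle_inv] at this

theorem exists_common_two_coloring (h₁ : τ₁ * τ₁ = 1) (h₂ : τ₂ * τ₂ = 1)
    (hfix₁ : ∀ w, τ₁ w ≠ w) (hfix₂ : ∀ w, τ₂ w ≠ w) :
    ∃ ε : W → Bool, ∀ w, ε (τ₁ w) ≠ ε w ∧ ε (τ₂ w) ≠ ε w := by
  let r := SameCycle.setoid (τ₂ * τ₁)
  let f : Quotient r → Quotient r :=
    Quotient.map τ₁ fun _ _ => SameCycle.apply_of_involutive h₁ h₂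
  have hf : Involutive f := by
    rintro ⟨w⟩
    exact congrArg (Quotient.mk r) (congrFun (congrArg DFunLike.coe h₁) w)
  obtain ⟨δ, hδ⟩ := hf.exists_two_coloring (by
    rintro ⟨w⟩ h
    exact not_sameCycle_apply_of_fixedPointFree h₁ h₂ hfix₁ hfix₂ w (Quotient.exact h).symm)
  refine ⟨fun w => δ ⟦w⟧, fun w => ⟨hδ ⟦w⟧, ?_⟩⟩
  have hτ₂ : (τ₂ * τ₁) (τ₁ w) = τ₂ w := by
    rw [mul_apply, ← mul_apply τ₁, h₁, one_apply]
  have : (τ₂ * τ₁).SameCycle (τ₁ w) (τ₂ w) := ⟨1, by rw [zpow_one, hτ₂]⟩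
  show δ ⟦τ₂ w⟧ ≠ δ ⟦w⟧
  rw [← Quotient.sound this]
  exact hδ ⟦w⟧

end Equiv.Perm

namespace Function

/-- Fixed points of `σ` become swaps between the two sheets `V × {false}` and `V × {true}`. -/
def fixedPointFreeLift {V : Type*} [DecidableEq V] (σ : V → V) (p : V × Bool) : V × Bool :=
  if σ p.1 = p.1 then (p.1, !p.2) else (σ p.1, p.2)

variable {V : Type*} [DecidableEq V] {σ : V → V}

theorem fixedPointFreeLift_of_ne {v : V} (hv : σ v ≠ v) (b : Bool) :
    fixedPointFreeLift σ (v, b) = (σ v, b) :=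
  if_neg hv

theorem fixedPointFreeLift_ne (p : V × Bool) : fixedPointFreeLift σ p ≠ p := by
  unfold fixedPointFreeLift
  split_ifs with h
  · simp [Prod.ext_iff]
  · simpa [Prod.ext_iff] using h

theorem Involutive.fixedPointFreeLift (hσ : Involutive σ) :
    Involutive (fixedPointFreeLift σ) := by
  rintro ⟨v, b⟩
  by_cases hv : σ v = v
  · simp [Function.fixedPointFreeLift, hv]
  · have hσv : σ (σ v) ≠ σ v := by rwa [hσ v, ne_comm]
    rw [fixedPointFreeLift_of_ne hv, fixedPointFreeLift_of_ne hσv, hσ v]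

theorem Involutive.exists_common_two_coloring {σ₁ σ₂ : V → V} (h₁ : Involutive σ₁)
    (h₂ : Involutive σ₂) :
    ∃ ε : V → Bool, ∀ v, (σ₁ v ≠ v → ε (σ₁ v) ≠ ε v) ∧ (σ₂ v ≠ v → ε (σ₂ v) ≠ ε v) := by
  obtain ⟨ε, hε⟩ := Perm.exists_common_two_coloring (τ₁ := h₁.fixedPointFreeLift.toPerm)
    (τ₂ := h₂.fixedPointFreeLift.toPerm) (Perm.ext h₁.fixedPointFreeLift)
    (Perm.ext h₂.fixedPointFreeLift) fixedPointFreeLift_ne fixedPointFreeLift_ne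
  refine ⟨fun v => ε (v, false), fun v => ⟨fun hv => ?_, fun hv => ?_⟩⟩
  · simpa [fixedPointFreeLift_of_ne hv] using (hε (v, false)).1
  · simpa [fixedPointFreeLift_of_ne hv] using (hε (v, false)).2

end Function

theorem Sym2.exists_eq_mk_of_apply_ne {α : Type*} {f : α → Bool} {u v : α} (huv : f u ≠ f v)
    (b : Bool) : ∃ p : α × α, s(p.1, p.2) = s(u, v) ∧ f p.1 = b ∧ f p.2 = !b := by
  have hv : f v = !f u := Bool.eq_not.mpr huv.symm
  by_cases hb : f u = b
  · exact ⟨(u, v), rfl, hb, hb ▸ hv⟩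
  · have hu : f u = !b := Bool.eq_not.mpr hb
    exact ⟨(v, u), Sym2.eq_swap, by rw [hv, hu, Bool.not_not], hu⟩

namespace SimpleGraph.Subgraph.IsMatching

variable {V : Type*} {G : SimpleGraph V} {N N₁ N₂ : G.Subgraph}

theorem exists_involutive (hN : N.IsMatching) :
    ∃ σ : V → V, Involutive σ ∧ ∀ ⦃u v⦄, N.Adj u v → σ u = v := by
  classical
  let σ v := if hv : v ∈ N.verts then (hN hv).exists.choose else v
  have hσ : ∀ ⦃u v⦄, N.Adj u v → σ u = v := fun u v huv => by
    simp only [σ, dif_pos huv.fst_mem]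
    exact hN.eq_of_adj_left (hN huv.fst_mem).exists.choose_spec huv
  refine ⟨σ, fun v => ?_, hσ⟩
  by_cases hv : v ∈ N.verts
  · have hσv : σ v = (hN hv).exists.choose := dif_pos hv
    rw [hσv]
    exact hσ (hN hv).exists.choose_spec.symm
  · simp only [σ, dif_neg hv]

theorem exists_coloring_sup (h₁ : N₁.IsMatching) (h₂ : N₂.IsMatching) :
    Nonempty ((N₁ ⊔ N₂).spanningCoe.Coloring Bool) := by
  obtain ⟨σ₁, hσ₁, hadj₁⟩ := h₁.exists_involutive
  obtain ⟨σ₂, hσ₂, hadj₂⟩ := h₂.exists_involutive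
  classical
  obtain ⟨ε, hε⟩ := hσ₁.exists_common_two_coloring hσ₂
  refine ⟨Coloring.mk ε fun {u v} huv => ?_⟩
  rcases huv with huv | huv
  · simpa [hadj₁ huv] using ((hε u).1 (by rw [hadj₁ huv]; exact huv.ne.symm)).symm
  · simpa [hadj₂ huv] using ((hε u).2 (by rw [hadj₂ huv]; exact huv.ne.symm)).symm

theorem eq_of_mem_of_mem (hN : N.IsMatching) {e₁ e₂ : Sym2 V} (he₁ : e₁ ∈ N.edgeSet)
    (he₂ : e₂ ∈ N.edgeSet) {x : V} (hx₁ : x ∈ e₁) (hx₂ : x ∈ e₂) : e₁ = e₂ := by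
  obtain ⟨y, rfl⟩ := Sym2.mem_iff_exists.mp hx₁
  obtain ⟨z, rfl⟩ := Sym2.mem_iff_exists.mp hx₂
  rw [hN.eq_of_adj_left (Subgraph.mem_edgeSet.mp he₁) (Subgraph.mem_edgeSet.mp he₂)]

theorem eq_of_mem_of_mem_sup (h₁ : N₁.IsMatching) (h₂ : N₂.IsMatching) {e₁ e₂ : Sym2 V}
    (he₁ : e₁ ∈ N₁.edgeSet ∪ N₂.edgeSet) (he₂ : e₂ ∈ N₁.edgeSet ∪ N₂.edgeSet)
    (hsame : e₁ ∈ N₁.edgeSet ↔ e₂ ∈ N₁.edgeSet) {x : V} (hx₁ : x ∈ e₁) (hx₂ : x ∈ e₂) :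
    e₁ = e₂ := by
  by_cases hN₁ : e₁ ∈ N₁.edgeSet
  · exact h₁.eq_of_mem_of_mem hN₁ (hsame.mp hN₁) hx₁ hx₂
  · exact h₂.eq_of_mem_of_mem (he₁.resolve_left hN₁) (he₂.resolve_left (hsame.not.mp hN₁))
      hx₁ hx₂

theorem exists_orientation_injective (h₁ : N₁.IsMatching) (h₂ : N₂.IsMatching) :
    ∃ o : ↥(N₁.edgeSet ∪ N₂.edgeSet) → V × V, (∀ e, (o e).1 ≠ (o e).2) ∧
      (∀ e, s((o e).1, (o e).2) = e) ∧ Injective (Prod.fst ∘ o) ∧ Injective (Prod.snd ∘ o) := by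
  classical
  obtain ⟨C⟩ := exists_coloring_sup h₁ h₂
  have horient : ∀ e : ↥(N₁.edgeSet ∪ N₂.edgeSet), ∃ p : V × V, s(p.1, p.2) = e ∧
      C p.1 = decide (↑e ∈ N₁.edgeSet) ∧ C p.2 = !decide (↑e ∈ N₁.edgeSet) := by
    rintro ⟨e, he⟩
    induction e using Sym2.ind with
    | _ u v => exact Sym2.exists_eq_mk_of_apply_ne (C.valid he) _
  choose o ho_mk ho_fst ho_snd using horient
  have hmem_fst : ∀ e, (o e).1 ∈ e.1 := fun e => ho_mk e ▸ Sym2.mem_mk_left _ _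
  have hmem_snd : ∀ e, (o e).2 ∈ e.1 := fun e => ho_mk e ▸ Sym2.mem_mk_right _ _
  refine ⟨o, fun e h => ?_, ho_mk, fun e₁ e₂ (h : (o e₁).1 = (o e₂).1) => ?_,
    fun e₁ e₂ (h : (o e₁).2 = (o e₂).2) => ?_⟩
  · have := ho_fst e
    rw [h, ho_snd e] at this
    exact Bool.not_ne_self _ this
  · refine Subtype.ext <| eq_of_mem_of_mem_sup h₁ h₂ e₁.2 e₂.2 ?_ (hmem_fst e₁) (h ▸ hmem_fst e₂)
    rw [← decide_eq_decide, ← ho_fst, ← ho_fst]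
    exact congrArg C h
  · refine Subtype.ext <| eq_of_mem_of_mem_sup h₁ h₂ e₁.2 e₂.2 ?_ (hmem_snd e₁) (h ▸ hmem_snd e₂)
    rw [← decide_eq_decide, ← Bool.not_inj_iff, ← ho_snd, ← ho_snd]
    exact congrArg C h

end SimpleGraph.Subgraph.IsMatching

theorem commute_mul_mul_of_anticomm {R : Type*} [Ring R] {a b c d : R} (hac : a * c = -(c * a))
    (had : a * d = -(d * a)) (hbc : b * c = -(c * b)) (hbd : b * d = -(d * b)) :
    Commute (a * b) (c * d) :=
  calc a * b * (c * d) = -(a * c * (b * d)) := by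
        rw [mul_assoc a b, ← mul_assoc b, hbc]; noncomm_ring
    _ = -(c * (a * d) * b) := by rw [hac, hbd]; noncomm_ring
    _ = c * d * (a * b) := by rw [had]; noncomm_ring

theorem two_matchings_stabilizers_commute_general {V : Type*}
    {M : Type*} [AddCommGroup M] [Module ℂ M]
    (Q : QuadraticForm ℂ M) (G : SimpleGraph V)
    (N₁ N₂ : G.Subgraph) (h₁ : N₁.IsMatching) (h₂ : N₂.IsMatching)
    (c d : V → M)
    (hcc : ∀ v w, v ≠ w → QuadraticMap.polar Q (c v) (c w) = 0)
    (hdd : ∀ v w, v ≠ w → QuadraticMap.polar Q (d v) (d w) = 0)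
    (hcd : ∀ v w, QuadraticMap.polar Q (c v) (d w) = 0) :
    ∃ o : ↥(N₁.edgeSet ∪ N₂.edgeSet) → V × V,
      (∀ e : ↥(N₁.edgeSet ∪ N₂.edgeSet), (o e).1 ≠ (o e).2) ∧
      (∀ e : ↥(N₁.edgeSet ∪ N₂.edgeSet), Sym2.mk (o e).1 (o e).2 = (e : Sym2 V)) ∧
      (∀ e₁ e₂ : ↥(N₁.edgeSet ∪ N₂.edgeSet),
        (CliffordAlgebra.ι Q (c (o e₁).1) * CliffordAlgebra.ι Q (d (o e₁).2)) *
          (CliffordAlgebra.ι Q (c (o e₂).1) * CliffordAlgebra.ι Q (d (o e₂).2)) =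
        (CliffordAlgebra.ι Q (c (o e₂).1) * CliffordAlgebra.ι Q (d (o e₂).2)) *
          (CliffordAlgebra.ι Q (c (o e₁).1) * CliffordAlgebra.ι Q (d (o e₁).2))) := by
  obtain ⟨o, hne, hmk, hfst, hsnd⟩ := h₁.exists_orientation_injective h₂
  refine ⟨o, hne, hmk, fun e₁ e₂ => ?_⟩
  obtain rfl | he := eq_or_ne e₁ e₂
  · rfl
  have anticomm {x y : M} (h : QuadraticMap.polar Q x y = 0) :=
    CliffordAlgebra.ι_mul_ι_comm_of_isOrtho (QuadraticMap.isOrtho_polarBilin.mp h)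
  refine commute_mul_mul_of_anticomm (anticomm (hcc _ _ (hfst.ne he))) (anticomm (hcd _ _))
    (anticomm ?_) (anticomm (hdd _ _ (hsnd.ne he)))
  rw [QuadraticMap.polar_comm]
  exact hcd _ _

/-- Lemma 2: the edges of two matchings can be oriented so that all the corresponding
stabilizers, built from a Majorana family in the Clifford algebra, pairwise commute. -/
theorem two_matchings_stabilizers_commute {V : Type*} [Fintype V] [DecidableEq V]
    {M : Type*} [AddCommGroup M] [Module ℂ M]
    (Q : QuadraticForm ℂ M) (G : SimpleGraph V) [DecidableRel G.Adj]
    (N₁ N₂ : G.Subgraph) (h₁ : N₁.IsMatching) (h₂ : N₂.IsMatching)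
    (c d : V → M)
    (hQc : ∀ v, Q (c v) = 1) (hQd : ∀ v, Q (d v) = 1)
    (hcc : ∀ v w, v ≠ w → QuadraticMap.polar Q (c v) (c w) = 0)
    (hdd : ∀ v w, v ≠ w → QuadraticMap.polar Q (d v) (d w) = 0)
    (hcd : ∀ v w, QuadraticMap.polar Q (c v) (d w) = 0) :
    ∃ o : ↥(N₁.edgeSet ∪ N₂.edgeSet) → V × V,
      (∀ e : ↥(N₁.edgeSet ∪ N₂.edgeSet), (o e).1 ≠ (o e).2) ∧
      (∀ e : ↥(N₁.edgeSet ∪ N₂.edgeSet), Sym2.mk (o e).1 (o e).2 = (e : Sym2 V)) ∧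
      (∀ e₁ e₂ : ↥(N₁.edgeSet ∪ N₂.edgeSet),
        (CliffordAlgebra.ι Q (c (o e₁).1) * CliffordAlgebra.ι Q (d (o e₁).2)) *
          (CliffordAlgebra.ι Q (c (o e₂).1) * CliffordAlgebra.ι Q (d (o e₂).2)) =
        (CliffordAlgebra.ι Q (c (o e₂).1) * CliffordAlgebra.ι Q (d (o e₂).2)) *
          (CliffordAlgebra.ι Q (c (o e₁).1) * CliffordAlgebra.ι Q (d (o e₁).2))) :=
  two_matchings_stabilizers_commute_general Q G N₁ N₂ h₁ h₂ c d hcc hdd hcd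
end

section
/- The Jordan–Wigner annihilation operators satisfy the fermionic anticommutation relation a(i) * a(j) + a(j) * a(i) = 0 for all i, j : Fin n (in particular a(i) * a(i) = 0). -/
/-- The Jordan–Wigner annihilation operator on `n` qubits: its `(s, t)` entry is
`(-1)^(#{k < i : t k = 1})` if `t i = 1`, `s i = 0` and `s k = t k` for all `k ≠ i`,
and `0` otherwise. -/
noncomputable def jwAnnihilation (n : ℕ) (i : Fin n) :
    Matrix (Fin n → Fin 2) (Fin n → Fin 2) ℂ :=
  Matrix.of fun s t =>
    if t i = 1 ∧ s i = 0 ∧ ∀ k, k ≠ i → s k = t k then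
      (-1 : ℂ) ^ (Finset.univ.filter fun k => k < i ∧ t k = 1).card
    else 0

lemma jw_entry (n : ℕ) (i j : Fin n) (hij : i ≠ j) (s t : Fin n → Fin 2) :
    (jwAnnihilation n i * jwAnnihilation n j) s t =
      if t i = 1 ∧ t j = 1 ∧ s i = 0 ∧ s j = 0 ∧ ∀ k, k ≠ i → k ≠ j → s k = t k then
        (-1 : ℂ) ^ ((Finset.univ.filter fun k => k < i ∧ k ≠ j ∧ t k = 1).card
          + (Finset.univ.filter fun k => k < j ∧ t k = 1).card)
      else 0 := by
  rw [Matrix.mul_apply]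
  rw [Finset.sum_eq_single (Function.update t j 0)]
  · simp only [jwAnnihilation, Matrix.of_apply]
    have h1 : Function.update t j 0 i = t i := Function.update_of_ne hij 0 t
    have h2 : Function.update t j 0 j = 0 := Function.update_self j 0 t
    have h3 : ∀ k, k ≠ j → Function.update t j 0 k = t k := fun k hk =>
      Function.update_of_ne hk 0 t
    by_cases hC : t i = 1 ∧ t j = 1 ∧ s i = 0 ∧ s j = 0 ∧ ∀ k, k ≠ i → k ≠ j → s k = t k
    · obtain ⟨hti, htj, hsi, hsj, hst⟩ := hC
      have hsk : ∀ k, k ≠ i → s k = Function.update t j 0 k := by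
        intro k hk
        by_cases hkj : k = j
        · subst hkj; rw [hsj, h2]
        · rw [hst k hk hkj, h3 k hkj]
      rw [if_pos ⟨h1.trans hti, hsi, hsk⟩, if_pos ⟨htj, h2, h3⟩,
        if_pos ⟨hti, htj, hsi, hsj, hst⟩]
      rw [← pow_add]
      congr 2
      refine congrArg Finset.card (Finset.filter_congr ?_)
      intro k _
      constructor
      · rintro ⟨hki, hk1⟩
        have hkj : k ≠ j := fun h => by subst h; rw [h2] at hk1; exact absurd hk1 (by decide)
        exact ⟨hki, hkj, (h3 k hkj) ▸ hk1⟩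
      · rintro ⟨hki, hkj, hk1⟩
        exact ⟨hki, (h3 k hkj).symm ▸ hk1⟩
    · rw [if_neg hC]
      rw [mul_eq_zero]
      by_cases ha : Function.update t j 0 i = 1 ∧ s i = 0 ∧
          ∀ k, k ≠ i → s k = Function.update t j 0 k
      · right
        rw [if_neg]
        rintro ⟨htj, -, -⟩
        obtain ⟨hui, hsi, hsk⟩ := ha
        exact hC ⟨h1 ▸ hui, htj, hsi, (hsk j (Ne.symm hij)).trans h2,
          fun k hki hkj => (hsk k hki).trans (h3 k hkj)⟩
      · left; rw [if_neg ha]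
  · intro u _ hu
    rw [mul_eq_zero]; right
    simp only [jwAnnihilation, Matrix.of_apply]
    rw [if_neg]
    rintro ⟨hc1, hc2, hc3⟩
    exact hu (funext fun k => by
      by_cases hk : k = j
      · subst hk; rw [hc2, Function.update_self]
      · rw [hc3 k hk, Function.update_of_ne hk])
  · intro h; exact absurd (Finset.mem_univ _) h

lemma card_split (n : ℕ) (i j : Fin n) (hij : i ≠ j) (t : Fin n → Fin 2) (htj : t j = 1) :
    (Finset.univ.filter fun k => k < i ∧ t k = 1).card =
      (Finset.univ.filter fun k => k < i ∧ k ≠ j ∧ t k = 1).card + (if j < i then 1 else 0) := by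
  by_cases hj : j < i
  · rw [if_pos hj]
    have heq : (Finset.univ.filter fun k => k < i ∧ t k = 1) =
        insert j (Finset.univ.filter fun k => k < i ∧ k ≠ j ∧ t k = 1) := by
      ext k
      simp only [Finset.mem_filter, Finset.mem_univ, true_and, Finset.mem_insert]
      constructor
      · rintro ⟨hki, hk1⟩
        by_cases hkj : k = j
        · exact Or.inl hkj
        · exact Or.inr ⟨hki, hkj, hk1⟩
      · rintro (rfl | ⟨hki, -, hk1⟩)
        · exact ⟨hj, htj⟩
        · exact ⟨hki, hk1⟩
    rw [heq, Finset.card_insert_of_notMem (by simp)]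
  · rw [if_neg hj, add_zero]
    refine congrArg Finset.card (Finset.filter_congr fun k _ => ?_)
    constructor
    · rintro ⟨hki, hk1⟩
      exact ⟨hki, fun h => hj (h ▸ hki), hk1⟩
    · rintro ⟨hki, -, hk1⟩
      exact ⟨hki, hk1⟩

lemma pow_aux (a b : ℕ) (h : Odd (a + b)) : (-1 : ℂ) ^ a + (-1 : ℂ) ^ b = 0 := by
  rcases Nat.even_or_odd a with ha | ha <;> rcases Nat.even_or_odd b with hb | hb
  · exact absurd (ha.add hb) (Nat.not_even_iff_odd.mpr h)
  · simp [ha.neg_one_pow, hb.neg_one_pow]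
  · simp [ha.neg_one_pow, hb.neg_one_pow]
  · exact absurd (ha.add_odd hb) (Nat.not_even_iff_odd.mpr h)


/-- The Jordan–Wigner annihilation operators satisfy the fermionic anticommutation
relation `a i * a j + a j * a i = 0`. -/
theorem jwAnnihilation_anticommute (n : ℕ) (i j : Fin n) :
    jwAnnihilation n i * jwAnnihilation n j + jwAnnihilation n j * jwAnnihilation n i = 0 := by
  rcases eq_or_ne i j with rfl | hij
  · ext s t
    simp only [Matrix.add_apply, Matrix.zero_apply, Matrix.mul_apply]
    rw [← Finset.sum_add_distrib]
    apply Finset.sum_eq_zero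
    intro u _
    simp only [jwAnnihilation, Matrix.of_apply]
    suffices h : (if u i = 1 ∧ s i = 0 ∧ ∀ k, k ≠ i → s k = u k then
        (-1 : ℂ) ^ (Finset.univ.filter fun k => k < i ∧ u k = 1).card else 0) *
        (if t i = 1 ∧ u i = 0 ∧ ∀ k, k ≠ i → u k = t k then
        (-1 : ℂ) ^ (Finset.univ.filter fun k => k < i ∧ t k = 1).card else 0) = 0 by
      rw [h]; ring
    rw [mul_eq_zero]
    by_cases h1 : u i = 1 ∧ s i = 0 ∧ ∀ k, k ≠ i → s k = u k
    · right
      rw [if_neg]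
      rintro ⟨-, h2, -⟩
      exact absurd (h1.1.symm.trans h2) (by decide)
    · left; rw [if_neg h1]
  · ext s t
    simp only [Matrix.add_apply, Matrix.zero_apply]
    rw [jw_entry n i j hij s t, jw_entry n j i hij.symm s t]
    by_cases hC : t i = 1 ∧ t j = 1 ∧ s i = 0 ∧ s j = 0 ∧ ∀ k, k ≠ i → k ≠ j → s k = t k
    · obtain ⟨hti, htj, hsi, hsj, hst⟩ := hC
      rw [if_pos ⟨hti, htj, hsi, hsj, hst⟩,
        if_pos ⟨htj, hti, hsj, hsi, fun k h1 h2 => hst k h2 h1⟩]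
      apply pow_aux
      have h1 := card_split n i j hij t htj
      have h2 := card_split n j i hij.symm t hti
      rw [h1, h2]
      rcases hij.lt_or_gt with hlt | hlt
      · rw [if_pos hlt, if_neg (asymm hlt)]
        simp only [Nat.odd_iff]; omega
      · rw [if_neg (asymm hlt), if_pos hlt]
        simp only [Nat.odd_iff]; omega
    · rw [if_neg hC, if_neg (fun h => hC ⟨h.2.1, h.1, h.2.2.2.1, h.2.2.1,
        fun k hk1 hk2 => h.2.2.2.2 k hk2 hk1⟩), add_zero]
end

section
/- The Jordan–Wigner annihilation operators satisfy the canonical anticommutation relation a(i) * (a(j))ᴴ + (a(j))ᴴ * a(i) = (if i = j then 1 else 0) for all i, j : Fin n, where (·)ᴴ denotes the conjugate transpose and 1 is the identity matrix. -/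
/-!
`a i` sends the basis vector `t` with `t i = 1` to `± (t with bit i cleared)`, the sign being the
parity of the ones of `t` below `i`. For `i = j` the two products are the projections onto
`s i = 0` and `s i = 1`. For `i ≠ j` both products connect exactly the pairs `s, t` that differ
in bits `i` and `j` only, and their signs differ: of the two counts of ones below `max i j`,
exactly one sees the bit `min i j` set.
-/

open Matrix

open Finset Function

section OnesBelow

variable {ι : Type*} [Fintype ι] [LinearOrder ι]

def onesBelow (i : ι) (s : ι → Fin 2) : ℕ := #{k | k < i ∧ s k = 1}

theorem onesBelow_congr {i : ι} {s t : ι → Fin 2} (h : ∀ k < i, s k = t k) :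
    onesBelow i s = onesBelow i t := by
  unfold onesBelow
  congr 1
  exact filter_congr fun k _ => and_congr_right fun hk => by rw [h k hk]

theorem onesBelow_update_self (i : ι) (s : ι → Fin 2) (b : Fin 2) :
    onesBelow i (update s i b) = onesBelow i s :=
  onesBelow_congr fun _ hk => update_of_ne hk.ne _ _

theorem onesBelow_eq_onesBelow_add_one {i m : ι} {s t : ι → Fin 2} (hm : m < i) (hs : s m = 1)
    (ht : t m = 0) (h : ∀ k < i, k ≠ m → s k = t k) : onesBelow i s = onesBelow i t + 1 := by
  unfold onesBelow
  rw [← card_insert_of_notMem (s := filter _ _) (a := m) (by simp [ht])]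
  congr 1
  ext k
  by_cases hkm : k = m
  · subst hkm; simp [hm, hs]
  · by_cases hk : k < i <;> simp [hk, hkm, h]

theorem onesBelow_add_onesBelow_of_lt {i j : ι} {s t : ι → Fin 2} (hij : i < j) (hsi : s i = 0)
    (hti : t i = 1) (hoff : ∀ k < j, k ≠ i → s k = t k) :
    onesBelow i s + onesBelow j t = onesBelow j s + onesBelow i t + 1 := by
  have below_i : onesBelow i s = onesBelow i t :=
    onesBelow_congr fun k hk => hoff k (hk.trans hij) hk.ne
  have below_j : onesBelow j t = onesBelow j s + 1 :=
    onesBelow_eq_onesBelow_add_one hij hti hsi fun k hk hki => (hoff k hk hki).symm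
  omega

theorem onesBelow_add_onesBelow_of_ne {i j : ι} {s t : ι → Fin 2} (hij : i ≠ j)
    (hsi : s i = 0) (hti : t i = 1) (hsj : s j = 1) (htj : t j = 0)
    (hoff : ∀ k, k ≠ i → k ≠ j → s k = t k) :
    onesBelow i s + onesBelow j t = onesBelow j s + onesBelow i t + 1 := by
  rcases hij.lt_or_gt with hlt | hgt
  · exact onesBelow_add_onesBelow_of_lt hlt hsi hti fun k hk hki => hoff k hki hk.ne
  · have := onesBelow_add_onesBelow_of_lt hgt htj hsj fun k hk hkj => (hoff k hk.ne hkj).symm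
    omega

end OnesBelow

section Update

variable {α : Type*} [DecidableEq α]

theorem eq_of_update_eq_update {β : α → Sort*} {f g : ∀ a, β a} {a : α} {x : β a}
    (h : update f a x = update g a x) (ha : f a = g a) : f = g := by
  calc f = update (update f a x) a (f a) := by simp
    _ = g := by rw [h, ha]; simp

theorem update_eq_update_iff_of_ne {γ : Type*} {f g : α → γ} {a b : α} {x y : γ}
    (hab : a ≠ b) :
    update f a x = update g b y ↔
      x = g a ∧ f b = y ∧ ∀ k, k ≠ a → k ≠ b → f k = g k := by
  rw [update_eq_iff, update_of_ne hab]
  refine and_congr_right fun _ => ⟨fun h => ⟨?_, fun k hka hkb => ?_⟩, fun h k hka => ?_⟩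
  · simpa using h b hab.symm
  · simpa [hkb] using h k hka
  · rcases eq_or_ne k b with rfl | hkb
    · simpa using h.1
    · simpa [hkb] using h.2 k hka hkb

end Update

section JordanWigner

variable {n : ℕ}

theorem jwAnnihilation_apply_eq_ite_update_one (i : Fin n) (s t : Fin n → Fin 2) :
    jwAnnihilation n i s t =
      if s i = 0 ∧ t = update s i 1 then (-1) ^ onesBelow i s else 0 := by
  have hc : (t i = 1 ∧ s i = 0 ∧ ∀ k ≠ i, s k = t k) ↔
      (s i = 0 ∧ t = update s i 1) := by
    rw [eq_update_iff]; grind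
  rw [jwAnnihilation, of_apply, if_congr hc rfl rfl]
  split_ifs with h
  · rw [h.2]; exact congrArg _ (onesBelow_update_self i s 1)
  · rfl

theorem jwAnnihilation_apply_eq_ite_update_zero (i : Fin n) (s t : Fin n → Fin 2) :
    jwAnnihilation n i s t = if t i = 1 ∧ s = update t i 0 then (-1) ^ onesBelow i t else 0 := by
  have hc : (t i = 1 ∧ s i = 0 ∧ ∀ k ≠ i, s k = t k) ↔
      (t i = 1 ∧ s = update t i 0) := by
    rw [eq_update_iff]
  rw [jwAnnihilation, of_apply, if_congr hc rfl rfl]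
  rfl

theorem conjTranspose_jwAnnihilation (i : Fin n) :
    (jwAnnihilation n i)ᴴ = (jwAnnihilation n i)ᵀ := by
  ext s t
  simp only [conjTranspose_apply, transpose_apply, jwAnnihilation_apply_eq_ite_update_one]
  split_ifs <;> simp

theorem jwAnnihilation_mul_conjTranspose_apply (i j : Fin n) (s t : Fin n → Fin 2) :
    (jwAnnihilation n i * (jwAnnihilation n j)ᴴ) s t =
      if s i = 0 ∧ t j = 0 ∧ update s i 1 = update t j 1 then
        (-1) ^ (onesBelow i s + onesBelow j t) else 0 := by
  simp only [conjTranspose_jwAnnihilation, mul_apply, jwAnnihilation_apply_eq_ite_update_one,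
    ite_and, transpose_apply, mul_ite, ite_mul, zero_mul, mul_zero, sum_ite_irrel, sum_ite_eq',
    mem_univ, if_true, sum_const_zero, pow_add]
  grind

theorem conjTranspose_jwAnnihilation_mul_apply (i j : Fin n) (s t : Fin n → Fin 2) :
    ((jwAnnihilation n j)ᴴ * jwAnnihilation n i) s t =
      if s j = 1 ∧ t i = 1 ∧ update s j 0 = update t i 0 then
        (-1) ^ (onesBelow j s + onesBelow i t) else 0 := by
  simp only [conjTranspose_jwAnnihilation, mul_apply, jwAnnihilation_apply_eq_ite_update_zero,
    ite_and, transpose_apply, mul_ite, ite_mul, zero_mul, mul_zero, sum_ite_irrel, sum_ite_eq',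
    mem_univ, if_true, sum_const_zero, pow_add]
  grind

theorem jwAnnihilation_mul_conjTranspose_add_self (i : Fin n) :
    jwAnnihilation n i * (jwAnnihilation n i)ᴴ + (jwAnnihilation n i)ᴴ * jwAnnihilation n i =
      1 := by
  ext s t
  rw [Matrix.add_apply, jwAnnihilation_mul_conjTranspose_apply,
    conjTranspose_jwAnnihilation_mul_apply, one_apply]
  by_cases hst : s = t
  · subst hst
    simp only [and_true, ← two_mul, pow_mul, neg_one_sq, one_pow, if_true]
    generalize s i = x
    fin_cases x <;> simp
  · have off_diag {a b : Fin 2} : ¬(s i = a ∧ t i = a ∧ update s i b = update t i b) :=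
      fun h => hst (eq_of_update_eq_update h.2.2 (h.1.trans h.2.1.symm))
    rw [if_neg hst, if_neg off_diag, if_neg off_diag, add_zero]

theorem jwAnnihilation_mul_conjTranspose_add_of_ne {i j : Fin n} (hij : i ≠ j) :
    jwAnnihilation n i * (jwAnnihilation n j)ᴴ + (jwAnnihilation n j)ᴴ * jwAnnihilation n i =
      0 := by
  ext s t
  have hcond : (s i = 0 ∧ t j = 0 ∧ update s i 1 = update t j 1) ↔
      (s j = 1 ∧ t i = 1 ∧ update s j 0 = update t i 0) := by
    rw [update_eq_update_iff_of_ne hij, update_eq_update_iff_of_ne hij.symm]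
    grind
  rw [Matrix.add_apply, jwAnnihilation_mul_conjTranspose_apply,
    conjTranspose_jwAnnihilation_mul_apply, Matrix.zero_apply, if_congr hcond rfl rfl]
  split_ifs with h
  · obtain ⟨hsj, hti, hupd⟩ := h
    obtain ⟨htj, hsi, hoff⟩ := (update_eq_update_iff_of_ne hij.symm).1 hupd
    rw [onesBelow_add_onesBelow_of_ne hij hsi hti hsj htj.symm fun k hki hkj => hoff k hkj hki,
      pow_succ]
    ring
  · rw [add_zero]

end JordanWigner

/-- The Jordan–Wigner operators satisfy the canonical anticommutation relation
`a i * (a j)ᴴ + (a j)ᴴ * a i = δ_{ij} 1`. -/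
theorem jwAnnihilation_car (n : ℕ) (i j : Fin n) :
    jwAnnihilation n i * (jwAnnihilation n j)ᴴ + (jwAnnihilation n j)ᴴ * jwAnnihilation n i =
      if i = j then 1 else 0 := by
  split_ifs with hij
  · subst hij
    exact jwAnnihilation_mul_conjTranspose_add_self i
  · exact jwAnnihilation_mul_conjTranspose_add_of_ne hij
end

section
/- Jordan–Wigner hopping-string identity: for i, j : Fin n with i < j, the hopping term satisfies (a(i))ᴴ * a(j) + (a(j))ᴴ * a(i) = (1/2 : ℂ) • (emb i X * emb j X + emb i Y * emb j Y) * ∏_{k, i < k < j} emb k Z, i.e. it equals one half of (X_i X_j + Y_i Y_j) multiplied by the product of Z operators on all sites strictly between i and j. -/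
open Matrix

/-- Embedding of a single-qubit operator `P` at site `i` of an `n`-qubit register. -/
noncomputable def emb (n : ℕ) (P : Matrix (Fin 2) (Fin 2) ℂ) (i : Fin n) :
    Matrix (Fin n → Fin 2) (Fin n → Fin 2) ℂ :=
  Matrix.of fun s t => if ∀ k, k ≠ i → s k = t k then P (s i) (t i) else 0

/-- The Pauli X matrix. -/
def pauliX : Matrix (Fin 2) (Fin 2) ℂ := !![0, 1; 1, 0]

/-- The Pauli Y matrix. -/
def pauliY : Matrix (Fin 2) (Fin 2) ℂ := !![0, -Complex.I; Complex.I, 0]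

/-- The Pauli Z matrix. -/
def pauliZ : Matrix (Fin 2) (Fin 2) ℂ := !![1, 0; 0, -1]

noncomputable def embF (n : ℕ) (P : Fin n → Matrix (Fin 2) (Fin 2) ℂ) :
    Matrix (Fin n → Fin 2) (Fin n → Fin 2) ℂ :=
  Matrix.of fun s t => ∏ k, P k (s k) (t k)

lemma embF_mul (n : ℕ) (P Q : Fin n → Matrix (Fin 2) (Fin 2) ℂ) :
    embF n P * embF n Q = embF n (fun k => P k * Q k) := by
  ext s t
  simp only [embF, Matrix.mul_apply, Matrix.of_apply]
  rw [show (∑ u : Fin n → Fin 2, (∏ k, P k (s k) (u k)) * ∏ k, Q k (u k) (t k))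
      = ∑ u : Fin n → Fin 2, ∏ k, (P k (s k) (u k) * Q k (u k) (t k)) by
    refine Finset.sum_congr rfl fun u _ => ?_
    rw [Finset.prod_mul_distrib]]
  rw [← Fintype.prod_sum fun k a => P k (s k) a * Q k a (t k)]

lemma embF_one (n : ℕ) : embF n (fun _ => 1) = 1 := by
  ext s t
  simp only [embF, Matrix.of_apply, Matrix.one_apply]
  by_cases h : s = t
  · subst h; simp
  · rw [if_neg h]
    obtain ⟨k, hk⟩ := Function.ne_iff.mp h
    exact Finset.prod_eq_zero (Finset.mem_univ k) (by simp [Matrix.one_apply, hk])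

lemma embF_conjTranspose (n : ℕ) (P : Fin n → Matrix (Fin 2) (Fin 2) ℂ) :
    (embF n P)ᴴ = embF n (fun k => (P k)ᴴ) := by
  ext s t
  simp [embF, Matrix.conjTranspose_apply, map_prod]

lemma emb_eq_embF (n : ℕ) (P : Matrix (Fin 2) (Fin 2) ℂ) (i : Fin n) :
    emb n P i = embF n (fun k => if k = i then P else 1) := by
  ext s t
  simp only [emb, embF, Matrix.of_apply]
  rw [← Finset.mul_prod_erase _ _ (Finset.mem_univ i)]
  simp only [if_pos rfl, if_true]
  by_cases h : ∀ k, k ≠ i → s k = t k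
  · rw [if_pos h, Finset.prod_eq_one, mul_one]
    intro k hk
    rw [if_neg (Finset.ne_of_mem_erase hk), Matrix.one_apply,
      if_pos (h k (Finset.ne_of_mem_erase hk))]
  · rw [if_neg h]
    push_neg at h
    obtain ⟨k, hki, hk⟩ := h
    rw [Finset.prod_eq_zero (Finset.mem_erase.mpr ⟨hki, Finset.mem_univ k⟩), mul_zero]
    rw [if_neg hki, Matrix.one_apply, if_neg hk]

def sigmaP : Matrix (Fin 2) (Fin 2) ℂ := !![0, 0; 1, 0]
def sigmaM : Matrix (Fin 2) (Fin 2) ℂ := !![0, 1; 0, 0]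

lemma fin2_cases (a : Fin 2) : a = 0 ∨ a = 1 := by omega

lemma sigmaP_ne_zero {a b : Fin 2} (h : sigmaP a b ≠ 0) : a = 1 ∧ b = 0 := by
  rcases fin2_cases a with ha | ha <;> rcases fin2_cases b with hb | hb <;>
    subst ha <;> subst hb <;> simp [sigmaP] at h ⊢

lemma sigmaM_ne_zero {a b : Fin 2} (h : sigmaM a b ≠ 0) : a = 0 ∧ b = 1 := by
  rcases fin2_cases a with ha | ha <;> rcases fin2_cases b with hb | hb <;>
    subst ha <;> subst hb <;> simp [sigmaM] at h ⊢

lemma pauliZ_ne_zero {a b : Fin 2} (h : pauliZ a b ≠ 0) : a = b := by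
  rcases fin2_cases a with ha | ha <;> rcases fin2_cases b with hb | hb <;>
    subst ha <;> subst hb <;> simp [pauliZ] at h ⊢

lemma one2_ne_zero {a b : Fin 2} (h : (1 : Matrix (Fin 2) (Fin 2) ℂ) a b ≠ 0) : a = b := by
  rcases fin2_cases a with ha | ha <;> rcases fin2_cases b with hb | hb <;>
    subst ha <;> subst hb <;> simp [Matrix.one_apply] at h ⊢

lemma key_scalar (a b c d : Fin 2) :
    sigmaP a b * sigmaM c d + sigmaM a b * sigmaP c d =
      (1 / 2 : ℂ) * (pauliX a b * pauliX c d + pauliY a b * pauliY c d) := by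
  rcases fin2_cases a with ha | ha <;> rcases fin2_cases b with hb | hb <;>
    rcases fin2_cases c with hc | hc <;> rcases fin2_cases d with hd | hd <;>
    subst ha <;> subst hb <;> subst hc <;> subst hd <;>
    simp [sigmaP, sigmaM, pauliX, pauliY] <;> ring_nf <;>
    simp [Complex.I_sq] <;> ring

lemma sigmaP_ct : sigmaPᴴ = sigmaM := by
  ext a b
  rcases fin2_cases a with ha | ha <;> rcases fin2_cases b with hb | hb <;>
    subst ha <;> subst hb <;> simp [sigmaP, sigmaM]

lemma pauliZ_ct : pauliZᴴ = pauliZ := by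
  ext a b
  rcases fin2_cases a with ha | ha <;> rcases fin2_cases b with hb | hb <;>
    subst ha <;> subst hb <;> simp [pauliZ]

lemma zstring (n : ℕ) (l : List (Fin n)) (hl : l.Nodup) :
    (l.map fun k => emb n pauliZ k).prod = embF n (fun k => if k ∈ l then pauliZ else 1) := by
  induction l with
  | nil => simp [embF_one]
  | cons a l ih =>
    rw [List.map_cons, List.prod_cons, ih (List.nodup_cons.mp hl).2, emb_eq_embF, embF_mul]
    refine congrArg (embF n) (funext fun k => ?_)
    by_cases hka : k = a
    · subst hka
      have hkl : k ∉ l := (List.nodup_cons.mp hl).1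
      simp [hkl]
    · simp [hka]

lemma jw_prod (n : ℕ) (i j : Fin n) (hij : i < j) :
    (jwAnnihilation n i)ᴴ * jwAnnihilation n j =
      embF n (fun k => if k = i then sigmaP else if k = j then sigmaM
        else if i < k ∧ k < j then pauliZ else 1) := by
  have hne : i ≠ j := ne_of_lt hij
  ext s t
  rw [Matrix.mul_apply]
  simp only [Matrix.conjTranspose_apply, jwAnnihilation, Matrix.of_apply, embF,
    apply_ite (star : ℂ → ℂ), star_zero, star_pow, star_neg, star_one]
  by_cases hmain : s i = 1 ∧ t i = 0 ∧ s j = 0 ∧ t j = 1 ∧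
      ∀ k, k ≠ i → k ≠ j → s k = t k
  · obtain ⟨h1, h2, h3, h4, h5⟩ := hmain
    rw [Finset.sum_eq_single (Function.update s i 0)]
    rotate_left
    · intro u _ hu
      rw [if_neg, zero_mul]
      rintro ⟨_, hui, hus⟩
      apply hu
      funext k
      by_cases hk : k = i
      · subst hk; rw [hui, Function.update_self]
      · rw [hus k hk, Function.update_of_ne hk]
    · intro h; exact absurd (Finset.mem_univ _) h
    have hcond2 : t j = 1 ∧ Function.update s i 0 j = 0 ∧
        ∀ k, k ≠ j → Function.update s i 0 k = t k := by
      refine ⟨h4, by rw [Function.update_of_ne (Ne.symm hne)]; exact h3, fun k hk => ?_⟩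
      by_cases hki : k = i
      · subst hki; rw [Function.update_self]; exact h2.symm
      · rw [Function.update_of_ne hki]; exact h5 k hki hk
    rw [if_pos ⟨h1, Function.update_self i 0 s, fun k hk => Function.update_of_ne hk 0 s⟩]
    rw [if_pos hcond2]
    -- now RHS product
    have hjmem : j ∈ Finset.univ.erase i := Finset.mem_erase.mpr ⟨Ne.symm hne, Finset.mem_univ j⟩
    rw [← Finset.mul_prod_erase Finset.univ _ (Finset.mem_univ i),
      ← Finset.mul_prod_erase _ _ hjmem]
    have hfi : (if i = i then sigmaP else if i = j then sigmaM
        else if i < i ∧ i < j then pauliZ else 1) (s i) (t i) = 1 := by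
      rw [if_pos rfl, h1, h2]; norm_num [sigmaP]
    have hfj : (if j = i then sigmaP else if j = j then sigmaM
        else if i < j ∧ j < j then pauliZ else 1) (s j) (t j) = 1 := by
      rw [if_neg (Ne.symm hne), if_pos rfl, h3, h4]; norm_num [sigmaM]
    have hrest : ∏ k ∈ (Finset.univ.erase i).erase j,
        (if k = i then sigmaP else if k = j then sigmaM
          else if i < k ∧ k < j then pauliZ else 1) (s k) (t k)
        = ∏ k ∈ (Finset.univ.erase i).erase j,
          (if i < k ∧ k < j ∧ s k = 1 then (-1 : ℂ) else 1) := by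
      refine Finset.prod_congr rfl fun k hk => ?_
      obtain ⟨hkj, hki, -⟩ : k ≠ j ∧ k ≠ i ∧ True := by
        simp only [Finset.mem_erase, Finset.mem_univ] at hk
        exact ⟨hk.1, hk.2.1, trivial⟩
      rw [if_neg hki, if_neg hkj]
      have hst : s k = t k := h5 k hki hkj
      by_cases hbtw : i < k ∧ k < j
      · rw [if_pos hbtw, ← hst]
        rcases fin2_cases (s k) with h | h <;> rw [h]
        · rw [if_neg (fun hc => absurd hc.2.2 (by decide))]; norm_num [pauliZ]
        · rw [if_pos ⟨hbtw.1, hbtw.2, rfl⟩]; norm_num [pauliZ]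
      · rw [if_neg hbtw, if_neg (fun hc => hbtw ⟨hc.1, hc.2.1⟩), ← hst,
          Matrix.one_apply_eq]
    rw [hrest, Finset.prod_ite, Finset.prod_const, Finset.prod_const, one_pow, mul_one]
    have hEfilter : ((Finset.univ.erase i).erase j).filter (fun k => i < k ∧ k < j ∧ s k = 1)
        = Finset.univ.filter (fun k => i < k ∧ k < j ∧ s k = 1) := by
      ext k
      simp only [Finset.mem_filter, Finset.mem_erase, Finset.mem_univ, true_and, and_true]
      constructor
      · rintro ⟨-, h⟩; exact h
      · rintro h; exact ⟨⟨h.2.1.ne, h.1.ne'⟩, h⟩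
    have hdisj : Disjoint (Finset.univ.filter fun k => k < i ∧ s k = 1)
        (Finset.univ.filter fun k => i < k ∧ k < j ∧ s k = 1) := by
      rw [Finset.disjoint_left]
      intro k hk1 hk2
      simp only [Finset.mem_filter] at hk1 hk2
      exact absurd hk2.2.1 (not_lt.mpr hk1.2.1.le)
    have hcount : (Finset.univ.filter fun k => k < j ∧ t k = 1).card
        = (Finset.univ.filter fun k => k < i ∧ s k = 1).card
          + (Finset.univ.filter fun k => i < k ∧ k < j ∧ s k = 1).card := by
      rw [← Finset.card_union_of_disjoint hdisj]
      congr 1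
      ext k
      simp only [Finset.mem_union, Finset.mem_filter, Finset.mem_univ, true_and]
      constructor
      · rintro ⟨hkj, hkt⟩
        rcases lt_trichotomy k i with h | h | h
        · exact Or.inl ⟨h, (h5 k h.ne hkj.ne).trans hkt⟩
        · exfalso; rw [h, h2] at hkt; exact absurd hkt (by decide)
        · exact Or.inr ⟨h, hkj, (h5 k h.ne' hkj.ne).trans hkt⟩
      · rintro (⟨hki, hks⟩ | ⟨hik, hkj, hks⟩)
        · exact ⟨hki.trans hij, ((h5 k hki.ne (hki.trans hij).ne).symm.trans hks)⟩
        · exact ⟨hkj, (h5 k hik.ne' hkj.ne).symm.trans hks⟩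
    rw [hfi, hfj, hEfilter, hcount, one_mul, one_mul, ← pow_add]
    rw [show (Finset.univ.filter fun k => k < i ∧ s k = 1).card
        + ((Finset.univ.filter fun k => k < i ∧ s k = 1).card
          + (Finset.univ.filter fun k => i < k ∧ k < j ∧ s k = 1).card)
        = 2 * (Finset.univ.filter fun k => k < i ∧ s k = 1).card
          + (Finset.univ.filter fun k => i < k ∧ k < j ∧ s k = 1).card by ring,
      pow_add, pow_mul]
    norm_num
  · trans (0 : ℂ)
    · apply Finset.sum_eq_zero
      intro u _
      by_cases hC1 : s i = 1 ∧ u i = 0 ∧ ∀ k, k ≠ i → u k = s k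
      · by_cases hC2 : t j = 1 ∧ u j = 0 ∧ ∀ k, k ≠ j → u k = t k
        · exfalso
          apply hmain
          obtain ⟨h1, hui, hus⟩ := hC1
          obtain ⟨h4, huj, hut⟩ := hC2
          refine ⟨h1, ?_, ?_, h4, ?_⟩
          · rw [← hut i hne]; exact hui
          · rw [← hus j (Ne.symm hne)]; exact huj
          · intro k hki hkj; rw [← hus k hki, hut k hkj]
        · rw [if_neg hC2, mul_zero]
      · rw [if_neg hC1, zero_mul]
    · symm
      by_contra hzero
      have hprod := Finset.prod_ne_zero_iff.mp hzero
      apply hmain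
      have hi' := hprod i (Finset.mem_univ i)
      rw [if_pos rfl] at hi'
      obtain ⟨hsi, hti⟩ := sigmaP_ne_zero hi'
      have hj' := hprod j (Finset.mem_univ j)
      rw [if_neg (Ne.symm hne), if_pos rfl] at hj'
      obtain ⟨hsj, htj⟩ := sigmaM_ne_zero hj'
      refine ⟨hsi, hti, hsj, htj, fun k hki hkj => ?_⟩
      have hk' := hprod k (Finset.mem_univ k)
      rw [if_neg hki, if_neg hkj] at hk'
      by_cases hbtw : i < k ∧ k < j
      · rw [if_pos hbtw] at hk'; exact pauliZ_ne_zero hk'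
      · rw [if_neg hbtw] at hk'; exact one2_ne_zero hk'

lemma sigmaM_ct : sigmaMᴴ = sigmaP := by
  rw [← sigmaP_ct, Matrix.conjTranspose_conjTranspose]

lemma jw_prod' (n : ℕ) (i j : Fin n) (hij : i < j) :
    (jwAnnihilation n j)ᴴ * jwAnnihilation n i =
      embF n (fun k => if k = i then sigmaM else if k = j then sigmaP
        else if i < k ∧ k < j then pauliZ else 1) := by
  have hne : i ≠ j := ne_of_lt hij
  have h : (jwAnnihilation n j)ᴴ * jwAnnihilation n i
      = ((jwAnnihilation n i)ᴴ * jwAnnihilation n j)ᴴ := by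
    rw [Matrix.conjTranspose_mul, Matrix.conjTranspose_conjTranspose]
  rw [h, jw_prod n i j hij, embF_conjTranspose]
  refine congrArg (embF n) (funext fun k => ?_)
  by_cases hki : k = i
  · simp [hki, sigmaP_ct]
  · by_cases hkj : k = j
    · simp [hkj, Ne.symm hne, sigmaM_ct]
    · by_cases hbtw : i < k ∧ k < j
      · simp [hki, hkj, hbtw, pauliZ_ct]
      · simp [hki, hkj, hbtw]

lemma prod_split (n : ℕ) (i j : Fin n) (hne : i ≠ j) (f : Fin n → ℂ) :
    ∏ k, f k = f i * (f j * ∏ k ∈ (Finset.univ.erase i).erase j, f k) := by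
  rw [Finset.mul_prod_erase _ f (Finset.mem_erase.mpr ⟨Ne.symm hne, Finset.mem_univ j⟩),
    Finset.mul_prod_erase _ f (Finset.mem_univ i)]

lemma embF_combine (n : ℕ) (i j : Fin n) (hne : i ≠ j)
    (A1 B1 A2 B2 C1 D1 C2 D2 : Matrix (Fin 2) (Fin 2) ℂ)
    (base : Fin n → Matrix (Fin 2) (Fin 2) ℂ)
    (hkey : ∀ a b c d : Fin 2, A1 a b * B1 c d + A2 a b * B2 c d
      = (1 / 2 : ℂ) * (C1 a b * D1 c d + C2 a b * D2 c d)) :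
    embF n (fun k => if k = i then A1 else if k = j then B1 else base k)
      + embF n (fun k => if k = i then A2 else if k = j then B2 else base k)
    = (1 / 2 : ℂ) •
        (embF n (fun k => if k = i then C1 else if k = j then D1 else base k)
          + embF n (fun k => if k = i then C2 else if k = j then D2 else base k)) := by
  ext s t
  simp only [embF, Matrix.add_apply, Matrix.smul_apply, Matrix.of_apply, smul_eq_mul]
  rw [prod_split n i j hne, prod_split n i j hne, prod_split n i j hne, prod_split n i j hne]
  beta_reduce
  have e1 : ∀ M N : Matrix (Fin 2) (Fin 2) ℂ,
      (if i = i then M else if i = j then N else base i) (s i) (t i) = M (s i) (t i) :=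
    fun M N => by rw [if_pos rfl]
  have e2 : ∀ M N : Matrix (Fin 2) (Fin 2) ℂ,
      (if j = i then M else if j = j then N else base j) (s j) (t j) = N (s j) (t j) :=
    fun M N => by rw [if_neg (Ne.symm hne), if_pos rfl]
  have hrest : ∀ M N : Matrix (Fin 2) (Fin 2) ℂ,
      (∏ k ∈ (Finset.univ.erase i).erase j,
        (if k = i then M else if k = j then N else base k) (s k) (t k))
      = ∏ k ∈ (Finset.univ.erase i).erase j, base k (s k) (t k) := by
    intro M N
    refine Finset.prod_congr rfl fun k hk => ?_
    simp only [Finset.mem_erase, Finset.mem_univ] at hk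
    rw [if_neg hk.2.1, if_neg hk.1]
  rw [e1 A1 B1, e1 A2 B2, e1 C1 D1, e1 C2 D2, e2 A1 B1, e2 A2 B2, e2 C1 D1, e2 C2 D2,
    hrest A1 B1, hrest A2 B2, hrest C1 D1, hrest C2 D2]
  linear_combination (hkey (s i) (t i) (s j) (t j)) *
    (∏ k ∈ (Finset.univ.erase i).erase j, base k (s k) (t k))

/-- Jordan–Wigner hopping-string identity: for `i < j`,
`(a i)ᴴ * a j + (a j)ᴴ * a i
  = (1/2) • (X_i X_j + Y_i Y_j) * ∏_{i < k < j} Z_k`. -/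
theorem jw_hopping_string (n : ℕ) (i j : Fin n) (hij : i < j) :
    (jwAnnihilation n i)ᴴ * jwAnnihilation n j +
      (jwAnnihilation n j)ᴴ * jwAnnihilation n i =
    ((1 / 2 : ℂ) •
        (emb n pauliX i * emb n pauliX j + emb n pauliY i * emb n pauliY j)) *
      (((List.finRange n).filter fun k => decide (i < k ∧ k < j)).map
        fun k => emb n pauliZ k).prod := by
  have hne : i ≠ j := ne_of_lt hij
  rw [jw_prod n i j hij, jw_prod' n i j hij]
  rw [zstring n _ ((List.nodup_finRange n).filter _)]
  have hmemf : (fun k => if k ∈ (List.finRange n).filter (fun k => decide (i < k ∧ k < j))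
      then pauliZ else 1) = fun k => if i < k ∧ k < j then pauliZ else 1 := by
    funext k
    have : (k ∈ (List.finRange n).filter fun k => decide (i < k ∧ k < j)) ↔
        (i < k ∧ k < j) := by
      simp [List.mem_filter]
    rw [if_congr this rfl rfl]
  rw [hmemf]
  rw [emb_eq_embF n pauliX i, emb_eq_embF n pauliX j, emb_eq_embF n pauliY i,
    emb_eq_embF n pauliY j, embF_mul, embF_mul, Matrix.smul_mul, Matrix.add_mul,
    embF_mul, embF_mul]
  have hnorm : ∀ P Q : Matrix (Fin 2) (Fin 2) ℂ,
      (fun k => (if k = i then P else 1) * (if k = j then Q else 1)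
        * (if i < k ∧ k < j then pauliZ else 1))
      = fun k => if k = i then P else if k = j then Q
          else if i < k ∧ k < j then pauliZ else 1 := by
    intro P Q
    funext k
    by_cases hki : k = i
    · subst hki
      rw [if_pos rfl, if_pos rfl, if_neg hne, if_neg (fun hc => lt_irrefl k hc.1),
        mul_one, mul_one]
    · by_cases hkj : k = j
      · subst hkj
        rw [if_neg hki, if_neg hki, if_pos rfl, if_pos rfl,
          if_neg (fun hc => lt_irrefl k hc.2), one_mul, mul_one]
      · rw [if_neg hki, if_neg hki, if_neg hkj, if_neg hkj, one_mul, one_mul]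
  rw [hnorm pauliX pauliX, hnorm pauliY pauliY]
  exact embF_combine n i j hne sigmaP sigmaM sigmaM sigmaP pauliX pauliX pauliY pauliY
    (fun k => if i < k ∧ k < j then pauliZ else 1) key_scalar
end
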